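/- Let A be an abelian category with infinite products and enough injective objects, let F ∈ A be a generator of A, and let Λ be a set. Suppose given a Λ-indexed family of short exact sequences 0 → C_λ → B_λ → A_λ → 0 in A such that Ext^1_A(F, C_λ) = 0 for every λ ∈ Λ. Then the induced sequence of products 0 → Π_{λ∈Λ} C_λ → Π_{λ∈Λ} B_λ → Π_{λ∈Λ} A_λ → 0 is a short exact sequence in A. (Consequently, the class of Λ-indexed families of objects of C = {C ∈ A : Ext^m_A(F, C) = 0 for all m ≥ 1} is a coresolving class in A^Λ adjusted to the direct product functor A^Λ → A.) -/

import Mathlib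

open CategoryTheory CategoryTheory.Limits

universe w v u

/-- The componentwise direct product of a family of cochain complexes. -/
noncomputable def prodComplex {A : Type u} [Category.{v} A] [Abelian A]
    {Λ : Type w} [HasProducts.{w} A] (K : Λ → CochainComplex A ℕ) :
    CochainComplex A ℕ where
  X n := ∏ᶜ fun l => (K l).X n
  d n m := Limits.Pi.map fun l => (K l).d n m
  shape n m h := by
    ext l
    have hz := (K l).shape n m h
    simp only [limMap_π, Discrete.natTrans_app, zero_comp]
    simp [hz]
  d_comp_d' n m k hnm hmk := by
    ext l
    simp

/-- The `i`-th derived product `Π^{(i)}_{λ∈Λ} M_λ` of a family of objects of an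
abelian category vanishes:  for every componentwise choice of injective
coresolutions, the `i`-th cohomology of the complex of componentwise direct
products is zero.  (This is the `i`-th right derived functor of the direct
product functor `A^Λ → A`, computed via componentwise injective coresolutions.) -/
noncomputable def DerivedProductVanishes {A : Type u} [Category.{v} A] [Abelian A]
    {Λ : Type w} [HasProducts.{w} A] (M : Λ → A) (i : ℕ) : Prop :=
  ∀ I : ∀ l : Λ, InjectiveResolution (M l),
    IsZero ((prodComplex fun l => (I l).cocomplex).homology i)

/-- The property `Ext^n_A(X, Y) = 0`, where the Ext group is computed in
the derived category of `A`. -/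
noncomputable def ExtVanishes {A : Type u} [Category.{v} A] [Abelian A]
    (X Y : A) (n : ℕ) : Prop :=
  letI := HasDerivedCategory.standard A
  letI := hasExt_of_hasDerivedCategory A
  Subsingleton (Abelian.Ext X Y n)

open DerivedCategory in
noncomputable def myIota {A : Type u} [Category.{v} A] [Abelian A] [HasDerivedCategory A] :
    DerivedCategory.singleFunctor A 0 ⋙ DerivedCategory.homologyFunctor A 0 ≅ 𝟭 A :=
  Functor.isoWhiskerRight ((SingleFunctors.evaluation _ _ 0).mapIso (singleFunctorsPostcompQIso A))
      (DerivedCategory.homologyFunctor A 0) ≪≫ Functor.associator _ _ _ ≪≫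
    Functor.isoWhiskerLeft _ (DerivedCategory.homologyFunctorFactors A 0) ≪≫
    HomologicalComplex.homologyFunctorSingleIso A _ 0

lemma lift_of_ext_one_subsingleton {A : Type u} [Category.{v} A] [Abelian A]
    {S : ShortComplex A} (hS : S.ShortExact) (F : A)
    (h1 : letI := HasDerivedCategory.standard A; letI := hasExt_of_hasDerivedCategory A;
          Subsingleton (Abelian.Ext F S.X₁ 1))
    (φ : F ⟶ S.X₃) : ∃ ψ : F ⟶ S.X₂, ψ ≫ S.g = φ := by
  letI := HasDerivedCategory.standard A
  letI := hasExt_of_hasDerivedCategory A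
  have h1' : Subsingleton (Abelian.Ext F S.X₁ 1) := h1
  obtain ⟨x₂, hx₂⟩ := Abelian.Ext.covariant_sequence_exact₃ (X := F) (hS := hS) (x₃ := Abelian.Ext.mk₀ φ) (hn₁ := rfl)
    (Subsingleton.elim _ _)
  let H := DerivedCategory.homologyFunctor A 0
  let e := (shiftFunctorZero' (DerivedCategory A) ((0 : ℕ) : ℤ) (by simp))
  let α : (DerivedCategory.singleFunctor A 0).obj F ⟶ (DerivedCategory.singleFunctor A 0).obj S.X₂ :=
    (x₂.hom : _ ⟶ _) ≫ e.hom.app _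
  refine ⟨myIota.inv.app F ≫ H.map α ≫ myIota.hom.app S.X₂, ?_⟩
  have nat : myIota.hom.app S.X₂ ≫ S.g =
      (DerivedCategory.singleFunctor A 0 ⋙ H).map S.g ≫ myIota.hom.app S.X₃ :=
    (myIota.hom.naturality S.g).symm
  rw [Category.assoc, Category.assoc, nat, ← Category.assoc (H.map α), ]
  have : H.map α ≫ (DerivedCategory.singleFunctor A 0 ⋙ H).map S.g =
      H.map ((Abelian.Ext.mk₀ φ).hom ≫ e.hom.app _) := by
    rw [show (DerivedCategory.singleFunctor A 0 ⋙ H).map S.g =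
      H.map ((DerivedCategory.singleFunctor A 0).map S.g) from rfl, ← Functor.map_comp]
    congr 1
    dsimp only [α, Functor.comp_map]
    rw [Category.assoc]
    have comm : e.hom.app ((DerivedCategory.singleFunctor A 0).obj S.X₂) ≫
        (DerivedCategory.singleFunctor A 0).map S.g =
        ((DerivedCategory.singleFunctor A 0).map S.g)⟦((0:ℕ) : ℤ)⟧' ≫ e.hom.app _ :=
      (e.hom.naturality _).symm
    rw [comm, ← Category.assoc]
    have := Abelian.Ext.hom_comp_singleFunctor_map_shift (C := A) x₂ S.g
    rw [this, hx₂]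
  rw [this]
  have hmk : (Abelian.Ext.mk₀ φ).hom ≫ e.hom.app _ = (DerivedCategory.singleFunctor A 0).map φ := by
    rw [Abelian.Ext.mk₀_hom]
    dsimp [ShiftedHom.mk₀, shiftFunctorZero']
    simp [e, shiftFunctorZero']
  rw [hmk]
  have nat2 : (H.map ((DerivedCategory.singleFunctor A 0).map φ)) ≫ myIota.hom.app S.X₃ =
      myIota.hom.app F ≫ φ := myIota.hom.naturality φ
  rw [nat2, ← Category.assoc, Iso.inv_hom_id_app]
  simp


/-- **In an abelian category with products and enough injectives possessing
a generator `F`, the direct product of a family of short exact sequences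
`0 → C_λ → B_λ → A_λ → 0` with `Ext¹(F, C_λ) = 0` for all `λ` is again
a short exact sequence.** -/
theorem product_shortExact_of_ext_vanishes
    {A : Type u} [Category.{v} A] [Abelian A] [HasProducts.{w} A]
    [EnoughInjectives A] (F : A)
    (hgen : ∀ M : A, ∃ (ι : Type v) (c : Cofan (fun _ : ι => F))
      (_ : IsColimit c) (p : c.pt ⟶ M), Epi p)
    {Λ : Type w} (S : Λ → ShortComplex A) (hS : ∀ l, (S l).ShortExact)
    (hC : ∀ l, ExtVanishes F ((S l).X₁) 1) :
    (ShortComplex.mk (Limits.Pi.map fun l => (S l).f)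
      (Limits.Pi.map fun l => (S l).g)
      (by rw [Limits.Pi.map_comp_map]; ext l; simp [(S l).zero])).ShortExact := by
  have w : (Limits.Pi.map fun l => (S l).f) ≫ (Limits.Pi.map fun l => (S l).g) = 0 := by
    rw [Limits.Pi.map_comp_map]; ext l; simp [(S l).zero]
  have cond : ∀ {T : A} (t : T ⟶ ∏ᶜ fun l => (S l).X₂),
      (t ≫ Limits.Pi.map fun l => (S l).g) = 0 →
      ∀ l, (t ≫ Pi.π _ l) ≫ (S l).g = 0 := by
    intro T t ht l
    have : t ≫ (Limits.Pi.map fun l => (S l).g) ≫ Pi.π _ l = 0 := by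
      rw [← Category.assoc, ht, zero_comp]
    simpa using this
  -- the product of the f's is a kernel of the product of the g's
  have hker : IsLimit (KernelFork.ofι _ w) := by
    refine KernelFork.IsLimit.ofι _ w
      (fun {T} t ht => Pi.lift fun l => (KernelFork.IsLimit.lift' (hS l).fIsKernel
        (t ≫ Pi.π _ l) (cond t ht l)).1) (fun {T} t ht => ?_) (fun {T} t ht m hm => ?_)
    · ext l
      have h := (KernelFork.IsLimit.lift' (hS l).fIsKernel (t ≫ Pi.π _ l) (cond t ht l)).2
      simp only [Category.assoc, Pi.map_π, Discrete.natTrans_app]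
      rw [← Category.assoc, limit.lift_π]
      exact h
    · ext l
      have h := (KernelFork.IsLimit.lift' (hS l).fIsKernel (t ≫ Pi.π _ l) (cond t ht l)).2
      rw [limit.lift_π]
      have hm' : m ≫ (Limits.Pi.map fun l => (S l).f) ≫ Pi.π _ l = t ≫ Pi.π _ l := by
        rw [← Category.assoc, hm]
      simp only [Pi.map_π, Discrete.natTrans_app] at hm'
      haveI := (hS l).mono_f
      rw [← cancel_mono (S l).f]
      dsimp at h ⊢
      rw [h, ← hm', Category.assoc]
  -- epi part
  have hepi : Epi (Limits.Pi.map fun l => (S l).g) := by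
    apply CategoryTheory.Abelian.epi_of_cokernel_π_eq_zero
    obtain ⟨ι, c, hc, p, hp⟩ := hgen (∏ᶜ fun l => (S l).X₃)
    have hpq : p ≫ cokernel.π (Limits.Pi.map fun l => (S l).g) = 0 := by
      apply hc.hom_ext
      rintro ⟨i⟩
      set φ : F ⟶ ∏ᶜ fun l => (S l).X₃ := c.ι.app ⟨i⟩ ≫ p with hφ
      choose ψ hψ using fun l =>
        lift_of_ext_one_subsingleton (hS l) F (hC l) (φ ≫ Pi.π _ l)
      have hΨ : Pi.lift ψ ≫ (Limits.Pi.map fun l => (S l).g) = φ := by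
        ext l
        simp [hψ l]
      rw [comp_zero, ← Category.assoc, ← hφ, ← hΨ, Category.assoc,
        cokernel.condition, comp_zero]
    exact (cancel_epi p).1 (by rw [hpq, comp_zero])
  haveI := fun l => (hS l).mono_f
  exact { exact := ShortComplex.exact_of_f_is_kernel _ hker,
          mono_f := show Mono (Limits.Pi.map fun l => (S l).f) from inferInstance, epi_g := hepi }
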